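/- Let n ≥ 1 be an integer, h = 1/(n+1), and let D : [0,1]³ → ℝ be a measurable function with 0 < D_min ≤ D(x) ≤ D_max for all x ∈ [0,1]³. Define the n³×n³ real matrix L by L_{(i,j,k),(i',j',k')} = ∫_{[0,1]³} D(x,y,z) ∇φ_{ijk} · ∇φ_{i'j'k'}. Then L is symmetric, for every v ∈ ℝ^{n³} one has D_min·vᵀP⁽³⁾v ≤ vᵀLv ≤ D_max·vᵀP⁽³⁾v, and every eigenvalue λ of L satisfies (4/3)·D_min·h³ ≤ λ ≤ 12·D_max·h; in particular the condition number of L is at most 9·(D_max/D_min)·(1/h²). -/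

import Mathlib

open MeasureTheory Matrix

/-!
With `u = ∑ v_α φ_α`, the quadratic forms are `vᵀ L v = ∫ D |∇u|²` and `vᵀ P⁽³⁾ v = ∫ |∇u|²`, so
the pointwise bounds on `D` give `D_min P⁽³⁾ ≤ L ≤ D_max P⁽³⁾` in the Loewner order, and the
eigenvalue bounds reduce to `(4/3) h³ ≤ P⁽³⁾ ≤ 12 h`.

By Fubini, `P⁽³⁾ = K ⊗ M ⊗ M + M ⊗ K ⊗ M + M ⊗ M ⊗ K` for the 1D stiffness and mass matrices
`K = (∫ gᵢ gⱼ)` and `M = (∫ φᵢ φⱼ)`. Kronecker products are monotone on positive semidefinite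
matrices, so it suffices that `4h ≤ K ≤ 4/h` and `h/3 ≤ M ≤ h`. On each cell `[kh, (k+1)h]` the
combination `∑ cᵢ gᵢ` is constant and `∑ cᵢ φᵢ` is affine, whence, with `c₀ = c_{n+1} = 0`,
`cᵀ K c = h⁻¹ ∑ₖ (c_{k+1} - c_k)²` and `cᵀ M c = (h/3) ∑ₖ (c_k² + c_k c_{k+1} + c_{k+1}²)`; the
lower bound for `K` is a discrete Poincaré inequality.
-/

open Finset Set
open scoped MatrixOrder Kronecker ENNReal ComplexOrder

namespace HatStiffness

section LoewnerOrder

variable {ι κ : Type*} [Fintype ι] [Fintype κ]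

theorem kronecker_mono {𝕜 : Type*} [RCLike 𝕜] {A A' : Matrix ι ι 𝕜} {B B' : Matrix κ κ 𝕜}
    (hA : 0 ≤ A) (hAA' : A ≤ A') (hB : 0 ≤ B) (hBB' : B ≤ B') : A ⊗ₖ B ≤ A' ⊗ₖ B' := by
  have hB' : 0 ≤ B' := hB.trans hBB'
  rw [le_iff, show A' ⊗ₖ B' - A ⊗ₖ B = (A' - A) ⊗ₖ B' + A ⊗ₖ (B' - B) by
    rw [sub_eq_iff_eq_add, add_assoc, ← kronecker_add, sub_add_cancel, ← add_kronecker,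
      sub_add_cancel]]
  exact (hAA'.kronecker hB'.posSemidef).add (hA.posSemidef.kronecker hBB')

variable [DecidableEq ι] [DecidableEq κ]

theorem smul_one_le_kronecker {a b : ℝ} {A : Matrix ι ι ℝ} {B : Matrix κ κ ℝ}
    (ha : 0 ≤ a) (hb : 0 ≤ b) (hA : a • 1 ≤ A) (hB : b • 1 ≤ B) : (a * b) • 1 ≤ A ⊗ₖ B := by
  simpa [smul_kronecker, kronecker_smul, one_kronecker_one, smul_smul, mul_comm] using
    kronecker_mono ((PosSemidef.one.smul ha).nonneg) hA ((PosSemidef.one.smul hb).nonneg) hB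

theorem kronecker_le_smul_one {a b : ℝ} {A : Matrix ι ι ℝ} {B : Matrix κ κ ℝ}
    (hA₀ : 0 ≤ A) (hB₀ : 0 ≤ B) (hA : A ≤ a • 1) (hB : B ≤ b • 1) : A ⊗ₖ B ≤ (a * b) • 1 := by
  simpa [smul_kronecker, kronecker_smul, one_kronecker_one, smul_smul, mul_comm] using
    kronecker_mono hA₀ hA hB₀ hB

end LoewnerOrder

section QuadraticForm

variable {ι : Type*} [Fintype ι]

theorem le_of_dotProduct_mulVec_le {A B : Matrix ι ι ℝ} (hA : A.IsHermitian) (hB : B.IsHermitian)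
    (h : ∀ x, x ⬝ᵥ A *ᵥ x ≤ x ⬝ᵥ B *ᵥ x) : A ≤ B :=
  PosSemidef.of_dotProduct_mulVec_nonneg (hB.sub hA) fun x => by
    simpa [sub_mulVec, dotProduct_sub] using h x

theorem dotProduct_mulVec_le_of_le {A B : Matrix ι ι ℝ} (h : A ≤ B) (x : ι → ℝ) :
    x ⬝ᵥ A *ᵥ x ≤ x ⬝ᵥ B *ᵥ x := by
  simpa [sub_mulVec, dotProduct_sub] using (le_iff.mp h).dotProduct_mulVec_nonneg x

variable [DecidableEq ι]

theorem dotProduct_smul_one_mulVec (a : ℝ) (v : ι → ℝ) :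
    v ⬝ᵥ (a • (1 : Matrix ι ι ℝ)) *ᵥ v = a * ∑ i, v i ^ 2 := by
  simp [smul_mulVec, dotProduct, mul_sum, sq, mul_left_comm]

theorem le_eigenvalue_of_smul_one_le {a lam : ℝ} {A : Matrix ι ι ℝ} (hA : a • 1 ≤ A) {v : ι → ℝ}
    (hv : v ≠ 0) (hAv : A *ᵥ v = lam • v) : a ≤ lam := by
  have hpos : 0 < v ⬝ᵥ v := by
    simpa using dotProduct_star_self_pos_iff.mpr hv
  have := dotProduct_mulVec_le_of_le hA v
  simp only [hAv, smul_mulVec, one_mulVec, dotProduct_smul, smul_eq_mul] at this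
  exact le_of_mul_le_mul_right this hpos

theorem eigenvalue_le_of_le_smul_one {a lam : ℝ} {A : Matrix ι ι ℝ} (hA : A ≤ a • 1) {v : ι → ℝ}
    (hv : v ≠ 0) (hAv : A *ᵥ v = lam • v) : lam ≤ a := by
  have hpos : 0 < v ⬝ᵥ v := by
    simpa using dotProduct_star_self_pos_iff.mpr hv
  have := dotProduct_mulVec_le_of_le hA v
  simp only [hAv, smul_mulVec, one_mulVec, dotProduct_smul, smul_eq_mul] at this
  exact le_of_mul_le_mul_right this hpos

end QuadraticForm

section WeightedGram

variable {α β : Type*} [MeasurableSpace α] [MeasurableSpace β] {ι κ : Type*}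
  {μ : Measure α} {ν : Measure β}

noncomputable def weightedGram (μ : Measure α) (w : α → ℝ) (u : ι → α → ℝ) : Matrix ι ι ℝ :=
  of fun i j => ∫ x, w x * (u i x * u j x) ∂μ

theorem isHermitian_weightedGram (w : α → ℝ) (u : ι → α → ℝ) :
    (weightedGram μ w u).IsHermitian := by
  ext i j
  simp only [conjTranspose_apply, star_trivial, weightedGram, of_apply, mul_comm (u i _)]

theorem mul_sum_sq_eq_sum_sum (s : Finset ι) (c : ℝ) (a v : ι → ℝ) :
    c * (∑ i ∈ s, v i * a i) ^ 2 = ∑ i ∈ s, ∑ j ∈ s, v i * v j * (c * (a i * a j)) := by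
  rw [sq, sum_mul_sum, mul_sum]
  exact sum_congr rfl fun i _ => by
    rw [mul_sum]; exact sum_congr rfl fun j _ => by ring

variable {w w₁ w₂ : α → ℝ} {u : ι → α → ℝ}

section

variable [Fintype ι]

theorem integrable_mul_sum_sq (hw : MemLp w ∞ μ)
    (hu : ∀ i j, Integrable (fun x => u i x * u j x) μ) (v : ι → ℝ) :
    Integrable (fun x => w x * (∑ i, v i * u i x) ^ 2) μ := by
  simp_rw [mul_sum_sq_eq_sum_sum]
  exact integrable_finsetSum _ fun i _ => integrable_finsetSum _ fun j _ =>
    ((hu i j).mul_of_top_right hw).const_mul _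

theorem dotProduct_weightedGram_mulVec (hw : MemLp w ∞ μ)
    (hu : ∀ i j, Integrable (fun x => u i x * u j x) μ) (v : ι → ℝ) :
    v ⬝ᵥ weightedGram μ w u *ᵥ v = ∫ x, w x * (∑ i, v i * u i x) ^ 2 ∂μ := by
  have hint : ∀ i j, Integrable (fun x => v i * v j * (w x * (u i x * u j x))) μ :=
    fun i j => ((hu i j).mul_of_top_right hw).const_mul _
  calc v ⬝ᵥ weightedGram μ w u *ᵥ v
      = ∑ i, ∑ j, ∫ x, v i * v j * (w x * (u i x * u j x)) ∂μ := by
        simp only [dotProduct, mulVec, weightedGram, of_apply, Finset.mul_sum, integral_const_mul]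
        exact Finset.sum_congr rfl fun i _ => Finset.sum_congr rfl fun j _ => by ring
    _ = ∫ x, ∑ i, ∑ j, v i * v j * (w x * (u i x * u j x)) ∂μ := by
        rw [integral_finsetSum _ fun i _ => integrable_finsetSum _ fun j _ => hint i j]
        exact Finset.sum_congr rfl fun i _ => (integral_finsetSum _ fun j _ => hint i j).symm
    _ = ∫ x, w x * (∑ i, v i * u i x) ^ 2 ∂μ := by
        simp_rw [mul_sum_sq_eq_sum_sum]

theorem weightedGram_mono (hw₁ : MemLp w₁ ∞ μ) (hw₂ : MemLp w₂ ∞ μ)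
    (hu : ∀ i j, Integrable (fun x => u i x * u j x) μ) (hw : w₁ ≤ᵐ[μ] w₂) :
    weightedGram μ w₁ u ≤ weightedGram μ w₂ u := by
  refine le_of_dotProduct_mulVec_le (isHermitian_weightedGram _ _)
    (isHermitian_weightedGram _ _) fun v => ?_
  rw [dotProduct_weightedGram_mulVec hw₁ hu, dotProduct_weightedGram_mulVec hw₂ hu]
  refine integral_mono_ae (integrable_mul_sum_sq hw₁ hu v) (integrable_mul_sum_sq hw₂ hu v) ?_
  filter_upwards [hw] with x hx
  exact mul_le_mul_of_nonneg_right hx (sq_nonneg _)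

end

theorem weightedGram_const (c : ℝ) (u : ι → α → ℝ) :
    weightedGram μ (fun _ => c) u = c • weightedGram μ 1 u := by
  ext i j
  simp [weightedGram, integral_const_mul]

def tensor (u : ι → α → ℝ) (v : κ → β → ℝ) : ι × κ → α × β → ℝ :=
  fun a p => u a.1 p.1 * v a.2 p.2

theorem weightedGram_one_tensor [SFinite μ] [SFinite ν] [Fintype ι] [Fintype κ]
    (u : ι → α → ℝ) (v : κ → β → ℝ) :
    weightedGram (μ.prod ν) 1 (tensor u v) = weightedGram μ 1 u ⊗ₖ weightedGram ν 1 v := by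
  ext a b
  simp only [weightedGram, tensor, kroneckerMap_apply, of_apply, Pi.one_apply, one_mul,
    mul_mul_mul_comm]
  exact integral_prod_mul (fun x => u a.1 x * u b.1 x) (fun y => v a.2 y * v b.2 y)

theorem integrable_tensor_mul [SFinite ν] {v : κ → β → ℝ}
    (hu : ∀ i j, Integrable (fun x => u i x * u j x) μ)
    (hv : ∀ i j, Integrable (fun y => v i y * v j y) ν) (a b : ι × κ) :
    Integrable (fun p => tensor u v a p * tensor u v b p) (μ.prod ν) := by
  simpa only [tensor, mul_mul_mul_comm] using (hu a.1 b.1).mul_prod (hv a.2 b.2)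

theorem memLp_top_restrict_of_forall_mem_Icc {s : Set α} {f : α → ℝ} {a b : ℝ}
    (hs : MeasurableSet s) (hf : Measurable f)
    (hfs : ∀ x ∈ s, a ≤ f x ∧ f x ≤ b) : MemLp f ∞ (μ.restrict s) :=
  memLp_top_of_bound hf.aestronglyMeasurable (max |a| |b|) <|
    (ae_restrict_iff' hs).mpr <| ae_of_all _ fun x hx =>
      abs_le_max_abs_abs (hfs x hx).1 (hfs x hx).2

end WeightedGram

section DiscreteInequalities

variable {n : ℕ} {e : ℕ → ℝ}

theorem sum_sq_add_sq_succ_eq (h0 : e 0 = 0) (h1 : e (n + 1) = 0) :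
    ∑ k ∈ range (n + 1), (e k ^ 2 + e (k + 1) ^ 2) = 2 * ∑ k ∈ range n, e (k + 1) ^ 2 := by
  rw [sum_add_distrib, sum_range_succ' (fun k => e k ^ 2), sum_range_succ (fun k => e (k + 1) ^ 2),
    h0, h1]
  ring

theorem sum_sq_le_sum_mass (h0 : e 0 = 0) (h1 : e (n + 1) = 0) :
    ∑ k ∈ range n, e (k + 1) ^ 2 ≤
      ∑ k ∈ range (n + 1), (e k ^ 2 + e k * e (k + 1) + e (k + 1) ^ 2) := by
  calc ∑ k ∈ range n, e (k + 1) ^ 2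
      = ∑ k ∈ range (n + 1), (e k ^ 2 + e (k + 1) ^ 2) / 2 := by
        rw [← sum_div, sum_sq_add_sq_succ_eq h0 h1]; ring
    _ ≤ _ := sum_le_sum fun k _ => by nlinarith [sq_nonneg (e k + e (k + 1))]

theorem sum_mass_le_three_mul (h0 : e 0 = 0) (h1 : e (n + 1) = 0) :
    ∑ k ∈ range (n + 1), (e k ^ 2 + e k * e (k + 1) + e (k + 1) ^ 2) ≤
      3 * ∑ k ∈ range n, e (k + 1) ^ 2 := by
  calc _ ≤ ∑ k ∈ range (n + 1), 3 / 2 * (e k ^ 2 + e (k + 1) ^ 2) :=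
        sum_le_sum fun k _ => by nlinarith [sq_nonneg (e k - e (k + 1))]
    _ = _ := by rw [← mul_sum, sum_sq_add_sq_succ_eq h0 h1]; ring

theorem sum_sq_sub_le_four_mul (h0 : e 0 = 0) (h1 : e (n + 1) = 0) :
    ∑ k ∈ range (n + 1), (e (k + 1) - e k) ^ 2 ≤ 4 * ∑ k ∈ range n, e (k + 1) ^ 2 := by
  calc _ ≤ ∑ k ∈ range (n + 1), 2 * (e k ^ 2 + e (k + 1) ^ 2) :=
        sum_le_sum fun k _ => by nlinarith [sq_nonneg (e k + e (k + 1))]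
    _ = _ := by rw [← mul_sum, sum_sq_add_sq_succ_eq h0 h1]; ring

-- Cauchy–Schwarz on the telescoping sums from either boundary node.
theorem mul_sq_le_mul_sum_sq_sub (h0 : e 0 = 0) (h1 : e (n + 1) = 0) {i : ℕ} (hi : i ≤ n + 1) :
    (n + 1) * e i ^ 2 ≤ i * (n + 1 - i) * ∑ k ∈ range (n + 1), (e (k + 1) - e k) ^ 2 := by
  set d := fun k => e (k + 1) - e k
  have hleft : e i ^ 2 ≤ i * ∑ k ∈ range i, d k ^ 2 := by
    have := sq_sum_le_card_mul_sum_sq (s := range i) (f := d)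
    rwa [card_range, sum_range_sub, h0, sub_zero] at this
  have hright : e i ^ 2 ≤ (n + 1 - i) * ∑ k ∈ Ico i (n + 1), d k ^ 2 := by
    have := sq_sum_le_card_mul_sum_sq (s := Ico i (n + 1)) (f := d)
    rwa [Nat.card_Ico, sum_Ico_sub _ hi, h1, zero_sub, neg_sq, Nat.cast_sub hi,
      Nat.cast_add_one] at this
  have hi' : (i : ℝ) ≤ n + 1 := by exact_mod_cast hi
  rw [← sum_range_add_sum_Ico _ hi]
  nlinarith [mul_le_mul_of_nonneg_left hleft (sub_nonneg.mpr hi'),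
    mul_le_mul_of_nonneg_left hright (Nat.cast_nonneg (α := ℝ) i)]

theorem sum_sq_le_mul_sum_sq_sub (h0 : e 0 = 0) (h1 : e (n + 1) = 0) :
    ∑ k ∈ range n, e (k + 1) ^ 2 ≤
      (n + 1) ^ 2 / 4 * ∑ k ∈ range (n + 1), (e (k + 1) - e k) ^ 2 := by
  set S := ∑ k ∈ range (n + 1), (e (k + 1) - e k) ^ 2
  have hS : 0 ≤ S := sum_nonneg fun k _ => sq_nonneg _
  have hn : (0 : ℝ) < n + 1 := by positivity
  have hk : ∀ k ∈ range n, e (k + 1) ^ 2 ≤ (n + 1) / 4 * S := fun k hk => by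
    have := mul_sq_le_mul_sum_sq_sub h0 h1 (i := k + 1) (by simp at hk; omega)
    push_cast at this
    rw [div_mul_eq_mul_div, le_div_iff₀ (by norm_num : (0 : ℝ) < 4)]
    nlinarith [mul_nonneg hS (sq_nonneg ((n : ℝ) + 1 - 2 * (k + 1)))]
  calc _ ≤ ∑ k ∈ range n, (n + 1) / 4 * S := sum_le_sum hk
    _ ≤ _ := by
      rw [sum_const, card_range, nsmul_eq_mul]
      nlinarith [mul_nonneg hS hn.le]

end DiscreteInequalities

section HatFunctions

variable {h x : ℝ} {i k : ℕ}

-- `hat h i` and `hatDeriv h i` are the paper's `φ_{i+1}` and `g_{i+1}`: the hat function at the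
-- node `(i + 1) h` and its a.e. derivative.
noncomputable def hat (h : ℝ) (i : ℕ) (x : ℝ) : ℝ := max 0 (1 - |x / h - (i + 1)|)

noncomputable def hatDeriv (h : ℝ) (i : ℕ) (x : ℝ) : ℝ :=
  if i * h < x ∧ x < (i + 1) * h then 1 / h
  else if (i + 1) * h < x ∧ x < (i + 2) * h then -(1 / h) else 0

@[fun_prop]
theorem continuous_hat (h : ℝ) (i : ℕ) : Continuous (hat h i) := by
  unfold hat; fun_prop

theorem measurable_hatDeriv (h : ℝ) (i : ℕ) : Measurable (hatDeriv h i) :=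
  Measurable.ite measurableSet_Ioo measurable_const
    (Measurable.ite measurableSet_Ioo measurable_const measurable_const)

theorem abs_hatDeriv_le (hh : 0 ≤ h) (i : ℕ) (x : ℝ) : |hatDeriv h i x| ≤ 1 / h := by
  unfold hatDeriv
  split_ifs <;> simp [abs_of_nonneg, hh]

theorem natCast_mem_Ioo_iff {s : ℝ} (hs : s ∈ Ioo (k : ℝ) (k + 1)) :
    s ∈ Ioo (i : ℝ) (i + 1) ↔ i = k := by
  refine ⟨fun hi => ?_, fun hik => hik ▸ hs⟩
  have h1 : i < k + 1 := by exact_mod_cast hi.1.trans hs.2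
  have h2 : k < i + 1 := by exact_mod_cast hs.1.trans hi.2
  omega

theorem hat_eq_of_mem_Icc (hx : x / h ∈ Icc (k : ℝ) (k + 1)) :
    hat h i x = (if i + 1 = k then k + 1 - x / h else 0) + (if i = k then x / h - k else 0) := by
  obtain ⟨hk₁, hk₂⟩ := hx
  unfold hat
  by_cases h₁ : i + 1 = k
  · subst h₁
    rw [if_pos rfl, if_neg (by omega)]
    push_cast at hk₁ hk₂ ⊢
    rw [abs_of_nonneg (by linarith), max_eq_right (by linarith)]
    ring
  by_cases h₂ : i = k
  · subst h₂
    rw [if_neg h₁, if_pos rfl, abs_of_nonpos (by linarith), max_eq_right (by linarith)]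
    ring
  rw [if_neg h₁, if_neg h₂, add_zero, max_eq_left]
  rcases lt_or_gt_of_ne h₂ with hik | hik
  · have : (i : ℝ) + 2 ≤ k := by exact_mod_cast (by omega : i + 2 ≤ k)
    rw [abs_of_nonneg (by linarith)]; linarith
  · have : (k : ℝ) + 1 ≤ i := by exact_mod_cast hik
    rw [abs_of_nonpos (by linarith)]; linarith

theorem hatDeriv_eq_of_mem_Ioo (hh : 0 < h) (hx : x / h ∈ Ioo (k : ℝ) (k + 1)) :
    hatDeriv h i x = (if i = k then 1 / h else 0) - (if i + 1 = k then 1 / h else 0) := by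
  have e₁ : (i * h < x ∧ x < (i + 1) * h) ↔ i = k := by
    rw [← lt_div_iff₀ hh, ← div_lt_iff₀ hh]; exact natCast_mem_Ioo_iff hx
  have e₂ : ((i + 1) * h < x ∧ x < (i + 2) * h) ↔ i + 1 = k := by
    rw [← lt_div_iff₀ hh, ← div_lt_iff₀ hh, show (i : ℝ) + 2 = ((i + 1 : ℕ) : ℝ) + 1 by
      push_cast; ring, show (i : ℝ) + 1 = ((i + 1 : ℕ) : ℝ) by push_cast; ring]
    exact natCast_mem_Ioo_iff hx
  simp only [hatDeriv, e₁, e₂]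
  split_ifs <;> first | omega | ring

end HatFunctions

theorem integral_sq_lerp (a b p q : ℝ) :
    ∫ x in a..b, (p * (b - x) + q * (x - a)) ^ 2 = (b - a) ^ 3 / 3 * (p ^ 2 + p * q + q ^ 2) := by
  have hpoly : ∀ x, (p * (b - x) + q * (x - a)) ^ 2 =
      (p * b - q * a) ^ 2 + x * (2 * (p * b - q * a) * (q - p)) + x ^ 2 * (q - p) ^ 2 :=
    fun x => by ring
  simp_rw [hpoly]
  rw [intervalIntegral.integral_add (Continuous.intervalIntegrable (by fun_prop) _ _)
      (Continuous.intervalIntegrable (by fun_prop) _ _),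
    intervalIntegral.integral_add intervalIntegrable_const
      (Continuous.intervalIntegrable (by fun_prop) _ _)]
  simp only [intervalIntegral.integral_const, intervalIntegral.integral_mul_const, integral_id,
    integral_pow, smul_eq_mul]
  ring

section ZeroPad

variable {n : ℕ}

-- The coefficient at node `k`, for nodes `0, …, n + 1` with zero values at the boundary nodes.
def zeroPad (c : Fin n → ℝ) (k : ℕ) : ℝ := ∑ i : Fin n, if (i : ℕ) + 1 = k then c i else 0

theorem zeroPad_zero (c : Fin n → ℝ) : zeroPad c 0 = 0 := by simp [zeroPad]

theorem zeroPad_succ_self (c : Fin n → ℝ) : zeroPad c (n + 1) = 0 :=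
  sum_eq_zero fun i _ => if_neg (by omega)

theorem zeroPad_succ_of_lt (c : Fin n → ℝ) {k : ℕ} (hk : k < n) :
    zeroPad c (k + 1) = c ⟨k, hk⟩ := by
  rw [zeroPad, sum_eq_single ⟨k, hk⟩
    (fun i _ hi => if_neg fun h => hi (Fin.ext (Nat.succ_injective h))) (by simp), if_pos rfl]

theorem sum_range_zeroPad_sq (c : Fin n → ℝ) :
    ∑ k ∈ range n, zeroPad c (k + 1) ^ 2 = ∑ i, c i ^ 2 := by
  rw [← Fin.sum_univ_eq_sum_range]
  exact sum_congr rfl fun i _ => by rw [zeroPad_succ_of_lt c i.2]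

variable {h x : ℝ} {k : ℕ}

theorem sum_mul_hat_eq (c : Fin n → ℝ) (hx : x / h ∈ Icc (k : ℝ) (k + 1)) :
    ∑ i : Fin n, c i * hat h i x =
      zeroPad c k * (k + 1 - x / h) + zeroPad c (k + 1) * (x / h - k) := by
  simp only [hat_eq_of_mem_Icc hx, zeroPad, mul_add, sum_add_distrib, sum_mul, mul_ite, ite_mul,
    mul_zero, zero_mul, add_left_inj]

theorem sum_mul_hatDeriv_eq (c : Fin n → ℝ) (hh : 0 < h) (hx : x / h ∈ Ioo (k : ℝ) (k + 1)) :
    ∑ i : Fin n, c i * hatDeriv h i x = (zeroPad c (k + 1) - zeroPad c k) / h := by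
  simp only [hatDeriv_eq_of_mem_Ioo hh hx, zeroPad, mul_sub, sum_sub_distrib, sub_div, sum_div,
    mul_ite, ite_div, mul_zero, zero_div, add_left_inj, mul_one_div]

theorem integral_cell_sum_mul_hat_sq (c : Fin n → ℝ) (hh : 0 < h) (k : ℕ) :
    ∫ x in k * h..(k + 1) * h, (∑ i : Fin n, c i * hat h i x) ^ 2 =
      h / 3 * (zeroPad c k ^ 2 + zeroPad c k * zeroPad c (k + 1) + zeroPad c (k + 1) ^ 2) := by
  have hcell : EqOn (fun x => (∑ i : Fin n, c i * hat h i x) ^ 2)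
      (fun x => (zeroPad c k / h * ((k + 1) * h - x) + zeroPad c (k + 1) / h * (x - k * h)) ^ 2)
      (uIcc (k * h) ((k + 1) * h)) := fun x hx => by
    rw [Set.uIcc_of_le (by nlinarith)] at hx
    have hx' : x / h ∈ Icc (k : ℝ) (k + 1) :=
      ⟨(le_div_iff₀ hh).mpr hx.1, (div_le_iff₀ hh).mpr hx.2⟩
    simp only [sum_mul_hat_eq c hx']
    field_simp
  rw [intervalIntegral.integral_congr hcell, integral_sq_lerp]
  field_simp
  ring

theorem integral_cell_sum_mul_hatDeriv_sq (c : Fin n → ℝ) (hh : 0 < h) (k : ℕ) :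
    ∫ x in k * h..(k + 1) * h, (∑ i : Fin n, c i * hatDeriv h i x) ^ 2 =
      (zeroPad c (k + 1) - zeroPad c k) ^ 2 / h := by
  have hcell : EqOn (fun x => (∑ i : Fin n, c i * hatDeriv h i x) ^ 2)
      (fun _ => ((zeroPad c (k + 1) - zeroPad c k) / h) ^ 2) (Ioo (k * h) ((k + 1) * h)) :=
    fun x hx => by
      simp only [sum_mul_hatDeriv_eq c hh ⟨(lt_div_iff₀ hh).mpr hx.1, (div_lt_iff₀ hh).mpr hx.2⟩]
  rw [intervalIntegral.integral_of_le (by nlinarith), integral_Ioc_eq_integral_Ioo,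
    setIntegral_congr_fun measurableSet_Ioo hcell, setIntegral_const,
    Real.volume_real_Ioo_of_le (by nlinarith), smul_eq_mul]
  field_simp
  ring

end ZeroPad

section GramBounds1D

variable {n : ℕ} {h : ℝ}

noncomputable def massMatrix1D (n : ℕ) (h : ℝ) : Matrix (Fin n) (Fin n) ℝ :=
  weightedGram (volume.restrict (Icc 0 1)) 1 fun i : Fin n => hat h i

noncomputable def stiffnessMatrix1D (n : ℕ) (h : ℝ) : Matrix (Fin n) (Fin n) ℝ :=
  weightedGram (volume.restrict (Icc 0 1)) 1 fun i : Fin n => hatDeriv h i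

theorem integral_Icc_eq_sum_cells {f : ℝ → ℝ} (hh : h = 1 / (n + 1))
    (hf : IntegrableOn f (Icc 0 1)) :
    ∫ x in Icc 0 1, f x = ∑ k ∈ range (n + 1), ∫ x in k * h..(k + 1) * h, f x := by
  have hpos : 0 < h := by rw [hh]; positivity
  have hnh : (n + 1) * h = 1 := by rw [hh]; field_simp
  have hcells := intervalIntegral.sum_integral_adjacent_intervals (a := fun k : ℕ => k * h)
    (n := n + 1) (f := f) (μ := volume) fun k hk => by
      have hk' : ((k : ℝ) + 1) * h ≤ 1 := by
        have : (k : ℝ) + 1 ≤ n + 1 := by exact_mod_cast Nat.succ_le_of_lt hk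
        nlinarith
      refine (intervalIntegrable_iff_integrableOn_Icc_of_le (by push_cast; nlinarith)).mpr
        (hf.mono_set (Icc_subset_Icc (by positivity) (by push_cast; exact hk')))
  push_cast at hcells
  rw [hcells, hnh, zero_mul, intervalIntegral.integral_of_le zero_le_one,
    integral_Icc_eq_integral_Ioc]

theorem integrable_hat_mul_hat (h : ℝ) (i j : ℕ) :
    Integrable (fun x => hat h i x * hat h j x) (volume.restrict (Icc 0 1)) :=
  ((continuous_hat h i).mul (continuous_hat h j)).integrableOn_Icc

theorem integrable_hatDeriv_mul_hatDeriv (hh : 0 ≤ h) (i j : ℕ) :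
    Integrable (fun x => hatDeriv h i x * hatDeriv h j x) (volume.restrict (Icc 0 1)) :=
  .of_bound ((measurable_hatDeriv h i).mul (measurable_hatDeriv h j)).aestronglyMeasurable
    (1 / h * (1 / h)) <| ae_of_all _ fun x => by
      rw [Real.norm_eq_abs, abs_mul]
      exact mul_le_mul (abs_hatDeriv_le hh i x) (abs_hatDeriv_le hh j x) (abs_nonneg _)
        (by positivity)

theorem dotProduct_massMatrix1D_mulVec (hh : h = 1 / (n + 1)) (c : Fin n → ℝ) :
    c ⬝ᵥ massMatrix1D n h *ᵥ c =
      h / 3 * ∑ k ∈ range (n + 1),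
        (zeroPad c k ^ 2 + zeroPad c k * zeroPad c (k + 1) + zeroPad c (k + 1) ^ 2) := by
  have hpos : 0 < h := by rw [hh]; positivity
  rw [massMatrix1D, dotProduct_weightedGram_mulVec (w := 1) (memLp_top_const 1)
    fun (i j : Fin n) => integrable_hat_mul_hat h i j]
  simp only [Pi.one_apply, one_mul]
  rw [integral_Icc_eq_sum_cells hh (Continuous.integrableOn_Icc (by fun_prop)), mul_sum]
  exact sum_congr rfl fun k _ => integral_cell_sum_mul_hat_sq c hpos k

theorem dotProduct_stiffnessMatrix1D_mulVec (hh : h = 1 / (n + 1)) (c : Fin n → ℝ) :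
    c ⬝ᵥ stiffnessMatrix1D n h *ᵥ c =
      (∑ k ∈ range (n + 1), (zeroPad c (k + 1) - zeroPad c k) ^ 2) / h := by
  have hpos : 0 < h := by rw [hh]; positivity
  have hu := fun (i j : Fin n) => integrable_hatDeriv_mul_hatDeriv hpos.le i j
  have hsq := integrable_mul_sum_sq (w := 1) (memLp_top_const 1) hu c
  rw [stiffnessMatrix1D, dotProduct_weightedGram_mulVec (w := 1) (memLp_top_const 1) hu]
  simp only [Pi.one_apply, one_mul] at hsq ⊢
  rw [integral_Icc_eq_sum_cells hh hsq, sum_div]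
  exact sum_congr rfl fun k _ => integral_cell_sum_mul_hatDeriv_sq c hpos k

theorem massMatrix1D_bounds (hh : h = 1 / (n + 1)) :
    (h / 3) • 1 ≤ massMatrix1D n h ∧ massMatrix1D n h ≤ h • 1 := by
  have hpos : 0 < h := by rw [hh]; positivity
  have hG : (massMatrix1D n h).IsHermitian := isHermitian_weightedGram _ _
  refine ⟨le_of_dotProduct_mulVec_le (isHermitian_one.smul (.all _)) hG fun c => ?_,
    le_of_dotProduct_mulVec_le hG (isHermitian_one.smul (.all _)) fun c => ?_⟩ <;>
  rw [dotProduct_massMatrix1D_mulVec hh, dotProduct_smul_one_mulVec, ← sum_range_zeroPad_sq]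
  · exact mul_le_mul_of_nonneg_left (sum_sq_le_sum_mass (zeroPad_zero c) (zeroPad_succ_self c))
      (by positivity)
  · linarith [mul_le_mul_of_nonneg_left (sum_mass_le_three_mul (zeroPad_zero c)
      (zeroPad_succ_self c)) (by positivity : (0 : ℝ) ≤ h / 3)]

theorem stiffnessMatrix1D_bounds (hh : h = 1 / (n + 1)) :
    (4 * h) • 1 ≤ stiffnessMatrix1D n h ∧ stiffnessMatrix1D n h ≤ (4 / h) • 1 := by
  have hpos : 0 < h := by rw [hh]; positivity
  have hG : (stiffnessMatrix1D n h).IsHermitian := isHermitian_weightedGram _ _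
  refine ⟨le_of_dotProduct_mulVec_le (isHermitian_one.smul (.all _)) hG fun c => ?_,
    le_of_dotProduct_mulVec_le hG (isHermitian_one.smul (.all _)) fun c => ?_⟩ <;>
  rw [dotProduct_stiffnessMatrix1D_mulVec hh, dotProduct_smul_one_mulVec, ← sum_range_zeroPad_sq]
  · have hnh : ((n : ℝ) + 1) * h = 1 := by rw [hh]; field_simp
    rw [le_div_iff₀ hpos]
    calc 4 * h * (∑ k ∈ range n, zeroPad c (k + 1) ^ 2) * h
        = 4 * h ^ 2 * ∑ k ∈ range n, zeroPad c (k + 1) ^ 2 := by ring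
      _ ≤ 4 * h ^ 2 * ((n + 1) ^ 2 / 4 *
            ∑ k ∈ range (n + 1), (zeroPad c (k + 1) - zeroPad c k) ^ 2) := by
          gcongr; exact sum_sq_le_mul_sum_sq_sub (zeroPad_zero c) (zeroPad_succ_self c)
      _ = ((n + 1) * h) ^ 2 * ∑ k ∈ range (n + 1), (zeroPad c (k + 1) - zeroPad c k) ^ 2 := by
          ring
      _ = _ := by rw [hnh, one_pow, one_mul]
  · rw [div_mul_eq_mul_div, div_le_div_iff_of_pos_right hpos]
    exact sum_sq_sub_le_four_mul (zeroPad_zero c) (zeroPad_succ_self c)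

end GramBounds1D

section Stiffness

variable {n : ℕ} {h : ℝ}

abbrev unitCube : Set (ℝ × ℝ × ℝ) := Set.Icc 0 1 ×ˢ Set.Icc 0 1 ×ˢ Set.Icc 0 1

theorem measurableSet_unitCube : MeasurableSet unitCube :=
  measurableSet_Icc.prod (measurableSet_Icc.prod measurableSet_Icc)

theorem restrict_cube_eq_prod :
    volume.restrict (unitCube) =
      (volume.restrict (Icc 0 1)).prod ((volume.restrict (Icc 0 1)).prod
        (volume.restrict (Icc 0 1))) := by
  rw [Measure.volume_eq_prod, ← Measure.prod_restrict, Measure.volume_eq_prod,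
    ← Measure.prod_restrict]

-- With `w = D` this is the matrix `L`, with `w = 1` the Laplacian matrix `P⁽³⁾`.
noncomputable def stiffnessMatrix3D (n : ℕ) (h : ℝ) (w : ℝ × ℝ × ℝ → ℝ) :
    Matrix (Fin n × Fin n × Fin n) (Fin n × Fin n × Fin n) ℝ :=
  let μ := volume.restrict (unitCube)
  let φ := fun i : Fin n => hat h i
  let g := fun i : Fin n => hatDeriv h i
  weightedGram μ w (tensor g (tensor φ φ)) + weightedGram μ w (tensor φ (tensor g φ)) +
    weightedGram μ w (tensor φ (tensor φ g))

theorem isSymm_stiffnessMatrix3D (n : ℕ) (h : ℝ) (w : ℝ × ℝ × ℝ → ℝ) :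
    (stiffnessMatrix3D n h w).IsSymm :=
  isHermitian_iff_isSymm.mp
    (((isHermitian_weightedGram _ _).add (isHermitian_weightedGram _ _)).add
      (isHermitian_weightedGram _ _))

theorem stiffnessMatrix3D_const (n : ℕ) (h c : ℝ) :
    stiffnessMatrix3D n h (fun _ => c) = c • stiffnessMatrix3D n h 1 := by
  simp only [stiffnessMatrix3D, weightedGram_const, smul_add]

theorem integrable_tensor3_mul {u v w : Fin n → ℝ → ℝ}
    (hu : ∀ i j, Integrable (fun x => u i x * u j x) (volume.restrict (Icc 0 1)))
    (hv : ∀ i j, Integrable (fun x => v i x * v j x) (volume.restrict (Icc 0 1)))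
    (hw : ∀ i j, Integrable (fun x => w i x * w j x) (volume.restrict (Icc 0 1)))
    (a b : Fin n × Fin n × Fin n) :
    Integrable (fun p => tensor u (tensor v w) a p * tensor u (tensor v w) b p)
      (volume.restrict (unitCube)) := by
  rw [restrict_cube_eq_prod]
  exact integrable_tensor_mul hu (integrable_tensor_mul hv hw) a b

theorem stiffnessMatrix3D_mono (hh : 0 ≤ h) {w₁ w₂ : ℝ × ℝ × ℝ → ℝ}
    (hw₁ : MemLp w₁ ∞ (volume.restrict (unitCube)))
    (hw₂ : MemLp w₂ ∞ (volume.restrict (unitCube)))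
    (hle : ∀ p ∈ unitCube, w₁ p ≤ w₂ p) :
    stiffnessMatrix3D n h w₁ ≤ stiffnessMatrix3D n h w₂ := by
  have hae : w₁ ≤ᵐ[volume.restrict (unitCube)] w₂ :=
    (ae_restrict_iff' measurableSet_unitCube).mpr (ae_of_all _ hle)
  have hφ := fun (i j : Fin n) => integrable_hat_mul_hat h i j
  have hg := fun (i j : Fin n) => integrable_hatDeriv_mul_hatDeriv hh i j
  exact add_le_add (add_le_add
    (weightedGram_mono hw₁ hw₂ (integrable_tensor3_mul hg hφ hφ) hae)
    (weightedGram_mono hw₁ hw₂ (integrable_tensor3_mul hφ hg hφ) hae))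
    (weightedGram_mono hw₁ hw₂ (integrable_tensor3_mul hφ hφ hg) hae)

theorem smul_stiffnessMatrix3D_one_le (hh : 0 ≤ h) {c : ℝ} {w : ℝ × ℝ × ℝ → ℝ}
    (hw : MemLp w ∞ (volume.restrict unitCube)) (hcw : ∀ p ∈ unitCube, c ≤ w p) :
    c • stiffnessMatrix3D n h 1 ≤ stiffnessMatrix3D n h w := by
  rw [← stiffnessMatrix3D_const]
  exact stiffnessMatrix3D_mono hh (memLp_top_const c) hw hcw

theorem stiffnessMatrix3D_le_smul_one (hh : 0 ≤ h) {c : ℝ} {w : ℝ × ℝ × ℝ → ℝ}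
    (hw : MemLp w ∞ (volume.restrict unitCube)) (hwc : ∀ p ∈ unitCube, w p ≤ c) :
    stiffnessMatrix3D n h w ≤ c • stiffnessMatrix3D n h 1 := by
  rw [← stiffnessMatrix3D_const]
  exact stiffnessMatrix3D_mono hh hw (memLp_top_const c) hwc

theorem eq_stiffnessMatrix3D (hh : 0 ≤ h) {w : ℝ × ℝ × ℝ → ℝ}
    (hw : MemLp w ∞ (volume.restrict (unitCube)))
    {M : Matrix (Fin n × Fin n × Fin n) (Fin n × Fin n × Fin n) ℝ}
    (hM : ∀ i j k i' j' k', M (i, j, k) (i', j', k') =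
      ∫ p in unitCube,
        w p * ((hatDeriv h i p.1 * hat h j p.2.1 * hat h k p.2.2) *
            (hatDeriv h i' p.1 * hat h j' p.2.1 * hat h k' p.2.2)
          + (hat h i p.1 * hatDeriv h j p.2.1 * hat h k p.2.2) *
            (hat h i' p.1 * hatDeriv h j' p.2.1 * hat h k' p.2.2)
          + (hat h i p.1 * hat h j p.2.1 * hatDeriv h k p.2.2) *
            (hat h i' p.1 * hat h j' p.2.1 * hatDeriv h k' p.2.2))) :
    M = stiffnessMatrix3D n h w := by
  have hφ := fun (i j : Fin n) => integrable_hat_mul_hat h i j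
  have hg := fun (i j : Fin n) => integrable_hatDeriv_mul_hatDeriv hh i j
  ext ⟨i, j, k⟩ ⟨i', j', k'⟩
  have h₁ := (integrable_tensor3_mul hg hφ hφ (i, j, k) (i', j', k')).mul_of_top_right hw
  have h₂ := (integrable_tensor3_mul hφ hg hφ (i, j, k) (i', j', k')).mul_of_top_right hw
  have h₃ := (integrable_tensor3_mul hφ hφ hg (i, j, k) (i', j', k')).mul_of_top_right hw
  simp only [Pi.mul_def] at h₁ h₂ h₃
  have h₁₂₃ := integral_add (h₁.add h₂) h₃
  simp only [Pi.add_apply] at h₁₂₃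
  rw [hM]
  simp only [stiffnessMatrix3D, Matrix.add_apply, weightedGram, of_apply]
  rw [← integral_add h₁ h₂, ← h₁₂₃]
  congr 1; ext p; simp only [tensor]; ring

theorem stiffnessMatrix3D_one_eq (n : ℕ) (h : ℝ) :
    stiffnessMatrix3D n h 1 =
      stiffnessMatrix1D n h ⊗ₖ (massMatrix1D n h ⊗ₖ massMatrix1D n h) +
      massMatrix1D n h ⊗ₖ (stiffnessMatrix1D n h ⊗ₖ massMatrix1D n h) +
      massMatrix1D n h ⊗ₖ (massMatrix1D n h ⊗ₖ stiffnessMatrix1D n h) := by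
  simp only [stiffnessMatrix3D, restrict_cube_eq_prod, weightedGram_one_tensor, massMatrix1D,
    stiffnessMatrix1D]

theorem stiffnessMatrix3D_one_bounds (hh : h = 1 / (n + 1)) :
    ((4 / 3) * h ^ 3) • 1 ≤ stiffnessMatrix3D n h 1 ∧ stiffnessMatrix3D n h 1 ≤ (12 * h) • 1 := by
  have hpos : 0 < h := by rw [hh]; positivity
  obtain ⟨hM₁, hM₂⟩ := massMatrix1D_bounds (n := n) hh
  obtain ⟨hK₁, hK₂⟩ := stiffnessMatrix1D_bounds (n := n) hh
  have hM₀ := (PosSemidef.one.smul (by positivity : 0 ≤ h / 3)).nonneg.trans hM₁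
  have hK₀ := (PosSemidef.one.smul (by positivity : 0 ≤ 4 * h)).nonneg.trans hK₁
  have hMM₀ := (hM₀.posSemidef.kronecker hM₀.posSemidef).nonneg
  have hKM₀ := (hK₀.posSemidef.kronecker hM₀.posSemidef).nonneg
  have hMK₀ := (hM₀.posSemidef.kronecker hK₀.posSemidef).nonneg
  have ha : 0 ≤ h / 3 := by positivity
  have hb : 0 ≤ 4 * h := by positivity
  rw [stiffnessMatrix3D_one_eq]
  constructor
  · calc ((4 / 3) * h ^ 3) • (1 : Matrix (Fin n × Fin n × Fin n) _ ℝ)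
        = (4 * h * (h / 3 * (h / 3))) • 1 + (h / 3 * (4 * h * (h / 3))) • 1 +
            (h / 3 * (h / 3 * (4 * h))) • 1 := by rw [← add_smul, ← add_smul]; ring_nf
      _ ≤ _ := add_le_add (add_le_add
          (smul_one_le_kronecker hb (by positivity) hK₁ (smul_one_le_kronecker ha ha hM₁ hM₁))
          (smul_one_le_kronecker ha (by positivity) hM₁ (smul_one_le_kronecker hb ha hK₁ hM₁)))
          (smul_one_le_kronecker ha (by positivity) hM₁ (smul_one_le_kronecker ha hb hM₁ hK₁))
  · calc _ ≤ (4 / h * (h * h)) • (1 : Matrix (Fin n × Fin n × Fin n) _ ℝ) +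
            (h * (4 / h * h)) • 1 + (h * (h * (4 / h))) • 1 := add_le_add (add_le_add
          (kronecker_le_smul_one hK₀ hMM₀ hK₂ (kronecker_le_smul_one hM₀ hM₀ hM₂ hM₂))
          (kronecker_le_smul_one hM₀ hKM₀ hM₂ (kronecker_le_smul_one hK₀ hM₀ hK₂ hM₂)))
          (kronecker_le_smul_one hM₀ hMK₀ hM₂ (kronecker_le_smul_one hM₀ hK₀ hM₂ hK₂))
      _ = (12 * h) • 1 := by rw [← add_smul, ← add_smul]; congr 1; field_simp; ring

end Stiffness

end HatStiffness

open HatStiffness in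
theorem stmt4_general (n : ℕ) (h : ℝ) (hh : h = 1 / ((n : ℝ) + 1))
    (φ g : Fin n → ℝ → ℝ)
    (hφ : ∀ (i : Fin n) (x : ℝ), φ i x = max 0 (1 - |x / h - ((i.val : ℝ) + 1)|))
    (hg : ∀ (i : Fin n) (x : ℝ),
      g i x = if (i.val : ℝ) * h < x ∧ x < ((i.val : ℝ) + 1) * h then 1 / h
        else if ((i.val : ℝ) + 1) * h < x ∧ x < ((i.val : ℝ) + 2) * h then -(1 / h)
        else 0)
    (P3 : Matrix (Fin n × Fin n × Fin n) (Fin n × Fin n × Fin n) ℝ)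
    (hP3 : ∀ i j k i' j' k', P3 (i, j, k) (i', j', k') =
      ∫ p in (Set.Icc (0:ℝ) 1) ×ˢ (Set.Icc (0:ℝ) 1) ×ˢ (Set.Icc (0:ℝ) 1),
        (g i p.1 * φ j p.2.1 * φ k p.2.2) * (g i' p.1 * φ j' p.2.1 * φ k' p.2.2)
        + (φ i p.1 * g j p.2.1 * φ k p.2.2) * (φ i' p.1 * g j' p.2.1 * φ k' p.2.2)
        + (φ i p.1 * φ j p.2.1 * g k p.2.2) * (φ i' p.1 * φ j' p.2.1 * g k' p.2.2))
    (D : ℝ × ℝ × ℝ → ℝ) (Dmin Dmax : ℝ) (hDmin : 0 < Dmin)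
    (hDmeas : Measurable D)
    (hD : ∀ p ∈ (Set.Icc (0:ℝ) 1) ×ˢ (Set.Icc (0:ℝ) 1) ×ˢ (Set.Icc (0:ℝ) 1),
      Dmin ≤ D p ∧ D p ≤ Dmax)
    (L : Matrix (Fin n × Fin n × Fin n) (Fin n × Fin n × Fin n) ℝ)
    (hL : ∀ i j k i' j' k', L (i, j, k) (i', j', k') =
      ∫ p in (Set.Icc (0:ℝ) 1) ×ˢ (Set.Icc (0:ℝ) 1) ×ˢ (Set.Icc (0:ℝ) 1),
        D p * ((g i p.1 * φ j p.2.1 * φ k p.2.2) * (g i' p.1 * φ j' p.2.1 * φ k' p.2.2)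
          + (φ i p.1 * g j p.2.1 * φ k p.2.2) * (φ i' p.1 * g j' p.2.1 * φ k' p.2.2)
          + (φ i p.1 * φ j p.2.1 * g k p.2.2) * (φ i' p.1 * φ j' p.2.1 * g k' p.2.2))) :
    L.IsSymm ∧
    (∀ v : Fin n × Fin n × Fin n → ℝ,
      Dmin * (v ⬝ᵥ P3.mulVec v) ≤ v ⬝ᵥ L.mulVec v ∧
      v ⬝ᵥ L.mulVec v ≤ Dmax * (v ⬝ᵥ P3.mulVec v)) ∧
    (∀ (lam : ℝ) (v : Fin n × Fin n × Fin n → ℝ), v ≠ 0 → L.mulVec v = lam • v →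
      (4 / 3) * Dmin * h ^ 3 ≤ lam ∧ lam ≤ 12 * Dmax * h) ∧
    (∀ (lam mu : ℝ) (v w : Fin n × Fin n × Fin n → ℝ), v ≠ 0 → w ≠ 0 →
      L.mulVec v = lam • v → L.mulVec w = mu • w →
      lam ≤ 9 * (Dmax / Dmin) * (1 / h ^ 2) * mu) := by
  have hpos : 0 < h := by rw [hh]; positivity
  obtain rfl : φ = fun i : Fin n => hat h i := funext₂ hφ
  obtain rfl : g = fun i : Fin n => hatDeriv h i := funext₂ hg
  have hDmax : 0 < Dmax :=
    hDmin.trans_le ((hD (0, 0, 0) (by simp)).1.trans (hD (0, 0, 0) (by simp)).2)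
  have hDbdd := memLp_top_restrict_of_forall_mem_Icc (μ := volume) measurableSet_unitCube hDmeas hD
  have hL' : L = stiffnessMatrix3D n h D := eq_stiffnessMatrix3D hpos.le hDbdd hL
  have hP' : P3 = stiffnessMatrix3D n h 1 :=
    eq_stiffnessMatrix3D hpos.le (memLp_top_const 1)
      (by simpa only [Pi.one_apply, one_mul] using hP3)
  have hlow : Dmin • P3 ≤ L := by
    rw [hL', hP']; exact smul_stiffnessMatrix3D_one_le hpos.le hDbdd fun p hp => (hD p hp).1
  have hup : L ≤ Dmax • P3 := by
    rw [hL', hP']; exact stiffnessMatrix3D_le_smul_one hpos.le hDbdd fun p hp => (hD p hp).2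
  obtain ⟨hP₁, hP₂⟩ := hP' ▸ stiffnessMatrix3D_one_bounds (n := n) hh
  have hL₁ : (Dmin * ((4 / 3) * h ^ 3)) • 1 ≤ L := by
    rw [mul_smul]; exact (smul_le_smul_of_nonneg_left hP₁ hDmin.le).trans hlow
  have hL₂ : L ≤ (Dmax * (12 * h)) • 1 := by
    rw [mul_smul]; exact hup.trans (smul_le_smul_of_nonneg_left hP₂ hDmax.le)
  refine ⟨hL' ▸ isSymm_stiffnessMatrix3D n h D, fun v => ⟨?_, ?_⟩, fun lam v hv hLv => ⟨?_, ?_⟩,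
    fun lam mu v w hv hw hLv hLw => ?_⟩
  · simpa [smul_mulVec, dotProduct_smul] using dotProduct_mulVec_le_of_le hlow v
  · simpa [smul_mulVec, dotProduct_smul] using dotProduct_mulVec_le_of_le hup v
  · linarith [le_eigenvalue_of_smul_one_le hL₁ hv hLv]
  · linarith [eigenvalue_le_of_le_smul_one hL₂ hv hLv]
  · calc lam ≤ Dmax * (12 * h) := eigenvalue_le_of_le_smul_one hL₂ hv hLv
      _ = 9 * (Dmax / Dmin) * (1 / h ^ 2) * (Dmin * ((4 / 3) * h ^ 3)) := by field_simp; ring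
      _ ≤ _ := mul_le_mul_of_nonneg_left (le_eigenvalue_of_smul_one_le hL₁ hw hLw) (by positivity)

/-- **Diffusion stiffness matrix `L`.** With `n ≥ 1`, `h = 1/(n+1)`, 3D hat functions
`φ_{ijk}` (with a.e. gradients built from `φ_i` and `g_i`), the 3D Laplacian matrix
`P⁽³⁾`, and a measurable coefficient `D` with `0 < D_min ≤ D ≤ D_max` on `[0,1]³`,
the matrix `L_{(i,j,k),(i',j',k')} = ∫_{[0,1]³} D ∇φ_{ijk} · ∇φ_{i'j'k'}` is symmetric,
satisfies `D_min·vᵀP⁽³⁾v ≤ vᵀLv ≤ D_max·vᵀP⁽³⁾v` for all `v`, every eigenvalue `λ` of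
`L` satisfies `(4/3)·D_min·h³ ≤ λ ≤ 12·D_max·h`, and hence the condition number of `L`
is at most `9·(D_max/D_min)·(1/h²)`. -/
theorem stmt4 (n : ℕ) (hn : 1 ≤ n) (h : ℝ) (hh : h = 1 / ((n : ℝ) + 1))
    (φ g : Fin n → ℝ → ℝ)
    (hφ : ∀ (i : Fin n) (x : ℝ), φ i x = max 0 (1 - |x / h - ((i.val : ℝ) + 1)|))
    (hg : ∀ (i : Fin n) (x : ℝ),
      g i x = if (i.val : ℝ) * h < x ∧ x < ((i.val : ℝ) + 1) * h then 1 / h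
        else if ((i.val : ℝ) + 1) * h < x ∧ x < ((i.val : ℝ) + 2) * h then -(1 / h)
        else 0)
    (P3 : Matrix (Fin n × Fin n × Fin n) (Fin n × Fin n × Fin n) ℝ)
    (hP3 : ∀ i j k i' j' k', P3 (i, j, k) (i', j', k') =
      ∫ p in (Set.Icc (0:ℝ) 1) ×ˢ (Set.Icc (0:ℝ) 1) ×ˢ (Set.Icc (0:ℝ) 1),
        (g i p.1 * φ j p.2.1 * φ k p.2.2) * (g i' p.1 * φ j' p.2.1 * φ k' p.2.2)
        + (φ i p.1 * g j p.2.1 * φ k p.2.2) * (φ i' p.1 * g j' p.2.1 * φ k' p.2.2)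
        + (φ i p.1 * φ j p.2.1 * g k p.2.2) * (φ i' p.1 * φ j' p.2.1 * g k' p.2.2))
    (D : ℝ × ℝ × ℝ → ℝ) (Dmin Dmax : ℝ) (hDmin : 0 < Dmin)
    (hDmeas : Measurable D)
    (hD : ∀ p ∈ (Set.Icc (0:ℝ) 1) ×ˢ (Set.Icc (0:ℝ) 1) ×ˢ (Set.Icc (0:ℝ) 1),
      Dmin ≤ D p ∧ D p ≤ Dmax)
    (L : Matrix (Fin n × Fin n × Fin n) (Fin n × Fin n × Fin n) ℝ)
    (hL : ∀ i j k i' j' k', L (i, j, k) (i', j', k') =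
      ∫ p in (Set.Icc (0:ℝ) 1) ×ˢ (Set.Icc (0:ℝ) 1) ×ˢ (Set.Icc (0:ℝ) 1),
        D p * ((g i p.1 * φ j p.2.1 * φ k p.2.2) * (g i' p.1 * φ j' p.2.1 * φ k' p.2.2)
          + (φ i p.1 * g j p.2.1 * φ k p.2.2) * (φ i' p.1 * g j' p.2.1 * φ k' p.2.2)
          + (φ i p.1 * φ j p.2.1 * g k p.2.2) * (φ i' p.1 * φ j' p.2.1 * g k' p.2.2))) :
    L.IsSymm ∧
    (∀ v : Fin n × Fin n × Fin n → ℝ,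
      Dmin * (v ⬝ᵥ P3.mulVec v) ≤ v ⬝ᵥ L.mulVec v ∧
      v ⬝ᵥ L.mulVec v ≤ Dmax * (v ⬝ᵥ P3.mulVec v)) ∧
    (∀ (lam : ℝ) (v : Fin n × Fin n × Fin n → ℝ), v ≠ 0 → L.mulVec v = lam • v →
      (4 / 3) * Dmin * h ^ 3 ≤ lam ∧ lam ≤ 12 * Dmax * h) ∧
    (∀ (lam mu : ℝ) (v w : Fin n × Fin n × Fin n → ℝ), v ≠ 0 → w ≠ 0 →
      L.mulVec v = lam • v → L.mulVec w = mu • w →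
      lam ≤ 9 * (Dmax / Dmin) * (1 / h ^ 2) * mu) :=
  stmt4_general n h hh φ g hφ hg P3 hP3 D Dmin Dmax hDmin hDmeas hD L hL
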